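/- arXiv:2205.08442 — 2 statements merged into one kernel-verified Lean document; each statement's English description precedes it below -/
import Mathlib

section
/- For matrices X, Y ∈ R^{n×p}, the Frobenius inner product satisfies ⟨X, Y⟩ ≤ ⟨σ(X), σ(Y)⟩, where σ(·) denotes the vector of singular values in nonincreasing order (von Neumann's trace inequality). -/
open Matrix

noncomputable def nuclearNorm {m n : Type*} [Fintype m] [Fintype n] [DecidableEq n]
    (A : Matrix m n ℝ) : ℝ :=
  ((Matrix.posSemidef_conjTranspose_mul_self A).1.eigenvectorUnitary.1 *
    diagonal ((RCLike.ofReal : ℝ → ℝ) ∘ Real.sqrt ∘ (Matrix.posSemidef_conjTranspose_mul_self A).1.eigenvalues) *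
    (star (Matrix.posSemidef_conjTranspose_mul_self A).1.eigenvectorUnitary : Matrix n n ℝ)).trace

noncomputable def opNorm {m n : Type*} [Fintype m] [Fintype n] [DecidableEq m] [DecidableEq n]
    (A : Matrix m n ℝ) : ℝ :=
  ‖(LinearMap.toContinuousLinearMap
      (Matrix.toEuclideanLin A : EuclideanSpace ℝ n →ₗ[ℝ] EuclideanSpace ℝ m))‖

def finner {m n : Type*} [Fintype m] [Fintype n] (A B : Matrix m n ℝ) : ℝ :=
  (Aᵀ * B).trace

noncomputable def nuclearSubdiff {m n : Type*} [Fintype m] [Fintype n] [DecidableEq n]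
    (X : Matrix m n ℝ) : Set (Matrix m n ℝ) :=
  {Y | ∀ Z, nuclearNorm X + finner Y (Z - X) ≤ nuclearNorm Z}

def rectDiag (n p : ℕ) (s : Fin p → ℝ) : Matrix (Fin n) (Fin p) ℝ :=
  Matrix.of fun i j => if (i : ℕ) = (j : ℕ) then s j else 0

def blockIR (n p r : ℕ) (R : Matrix (Fin (n - r)) (Fin (p - r)) ℝ) :
    Matrix (Fin n) (Fin p) ℝ :=
  Matrix.of fun i j =>
    if h : (i : ℕ) < r ∨ (j : ℕ) < r then (if (i : ℕ) = (j : ℕ) then 1 else 0)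
    else R ⟨i - r, by have := i.isLt; omega⟩ ⟨j - r, by have := j.isLt; omega⟩


/-! Writing `Q = U₁ᵀ U₂` and `P = V₁ᵀ V₂`, one has `⟨X, Y⟩ = ∑ᵢⱼ sᵢ tⱼ Qᵢⱼ Pᵢⱼ` (with `Q` read
on its leading `p × p` block). As `sᵢ tⱼ ≥ 0` and `Qᵢⱼ Pᵢⱼ ≤ (Qᵢⱼ² + Pᵢⱼ²) / 2`, it suffices to
bound `∑ᵢⱼ Dᵢⱼ sᵢ tⱼ ≤ ∑ᵢ sᵢ tᵢ` for `D` the entrywise square of an orthogonal matrix, which is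
doubly stochastic. By Birkhoff's theorem `D` is a convex combination of permutation matrices, for
which this is the rearrangement inequality; the leading block of `Q²` is handled by extending
`s` and `t` by zero. -/

open Function Finset

section Rearrangement

theorem Monovary.extend_zero {ι κ : Type*} {s t : ι → ℝ} (hst : Monovary s t) (hs : 0 ≤ s)
    (ht : 0 ≤ t) {e : ι → κ} (he : Injective e) : Monovary (extend e s 0) (extend e t 0) := by
  intro a b hab
  by_cases ha : ∃ i, e i = a
  · obtain ⟨i, rfl⟩ := ha
    by_cases hb : ∃ j, e j = b
    · obtain ⟨j, rfl⟩ := hb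
      simp only [he.extend_apply] at hab ⊢
      exact hst hab
    · rw [he.extend_apply, extend_apply' _ _ _ hb] at hab
      exact absurd hab (not_lt.2 (ht i))
  · rw [extend_apply' _ _ _ ha]
    by_cases hb : ∃ j, e j = b
    · obtain ⟨j, rfl⟩ := hb
      simpa [he.extend_apply] using hs j
    · rw [extend_apply' _ _ _ hb]
      exact le_rfl

variable {ι κ : Type*} [Fintype ι] [Fintype κ]

theorem Function.Injective.sum_extend_zero_mul {e : ι → κ} (he : Injective e) (s : ι → ℝ)
    (f : κ → ℝ) : ∑ a, extend e s 0 a * f a = ∑ i, s i * f (e i) :=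
  (Fintype.sum_of_injective e he _ _ (fun a ha ↦ by simp [extend_apply' _ _ _ ha])
    fun i ↦ by simp [he.extend_apply]).symm

variable [DecidableEq κ]

theorem Monovary.sum_mul_mul_le_of_mem_doublyStochastic {s t : κ → ℝ} (hst : Monovary s t)
    {D : Matrix κ κ ℝ} (hD : D ∈ doublyStochastic ℝ κ) :
    ∑ i, ∑ j, D i j * s i * t j ≤ ∑ i, s i * t i := by
  have hlin : IsLinearMap ℝ fun D : Matrix κ κ ℝ ↦ ∑ i, ∑ j, D i j * s i * t j :=
    ⟨fun A B ↦ by simp only [Matrix.add_apply, add_mul, sum_add_distrib],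
     fun c A ↦ by simp only [Matrix.smul_apply, smul_eq_mul, mul_sum, mul_assoc]⟩
  rw [← SetLike.mem_coe, doublyStochastic_eq_convexHull_permMatrix] at hD
  refine convexHull_min ?_ (convex_halfSpace_le hlin _) hD
  rintro _ ⟨σ, rfl⟩
  simpa [PEquiv.toMatrix_apply, eq_comm] using hst.sum_mul_comp_perm_le_sum_mul (σ := σ)

theorem Monovary.sum_submatrix_mul_mul_le_of_mem_doublyStochastic {s t : ι → ℝ}
    (hst : Monovary s t) (hs : 0 ≤ s) (ht : 0 ≤ t) {D : Matrix κ κ ℝ}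
    (hD : D ∈ doublyStochastic ℝ κ) {e : ι → κ} (he : Injective e) :
    ∑ i, ∑ j, D (e i) (e j) * s i * t j ≤ ∑ i, s i * t i := by
  have key := (hst.extend_zero hs ht he).sum_mul_mul_le_of_mem_doublyStochastic hD
  have hlhs : ∑ a, ∑ b, D a b * extend e s 0 a * extend e t 0 b
      = ∑ a, extend e s 0 a * ∑ b, extend e t 0 b * D a b := by
    simp only [mul_sum]
    exact sum_congr rfl fun a _ ↦ sum_congr rfl fun b _ ↦ by ring
  rw [hlhs, he.sum_extend_zero_mul] at key
  simp only [he.sum_extend_zero_mul, he.extend_apply] at key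
  simpa only [mul_sum, mul_comm, mul_left_comm] using key

end Rearrangement

theorem Matrix.orthogonal_transpose_mul {κ R : Type*} [Fintype κ] [DecidableEq κ]
    [CommRing R] {A B : Matrix κ κ R} (hA : Aᵀ * A = 1) (hB : Bᵀ * B = 1) :
    (Aᵀ * B)ᵀ * (Aᵀ * B) = 1 := by
  rw [transpose_mul, transpose_transpose, Matrix.mul_assoc, ← Matrix.mul_assoc A,
    mul_eq_one_comm.mp hA, Matrix.one_mul, hB]

theorem Matrix.map_sq_mem_doublyStochastic {κ : Type*} [Fintype κ] [DecidableEq κ]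
    {Q : Matrix κ κ ℝ} (hQ : Qᵀ * Q = 1) : Q.map (· ^ 2) ∈ doublyStochastic ℝ κ := by
  have hQ' : Q * Qᵀ = 1 := mul_eq_one_comm.mp hQ
  refine mem_doublyStochastic_iff_sum.2 ⟨fun i j ↦ sq_nonneg _, fun i ↦ ?_, fun j ↦ ?_⟩
  · simpa [mul_apply, sq] using congrFun (congrFun hQ' i) i
  · simpa [mul_apply, sq] using congrFun (congrFun hQ j) j

theorem finner_mul_mul_transpose {m n : Type*} [Fintype m] [Fintype n] (U₁ U₂ : Matrix m m ℝ)
    (A B : Matrix m n ℝ) (V₁ V₂ : Matrix n n ℝ) :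
    finner (U₁ * A * V₁ᵀ) (U₂ * B * V₂ᵀ) = finner (A * (V₁ᵀ * V₂)) (U₁ᵀ * U₂ * B) :=
  calc ((U₁ * A * V₁ᵀ)ᵀ * (U₂ * B * V₂ᵀ)).trace
      = (V₁ * (Aᵀ * U₁ᵀ * U₂ * B) * V₂ᵀ).trace := by
        simp only [transpose_mul, transpose_transpose, Matrix.mul_assoc]
    _ = (V₂ᵀ * (V₁ * (Aᵀ * U₁ᵀ * U₂ * B))).trace := trace_mul_comm _ _
    _ = _ := by simp only [finner, transpose_mul, transpose_transpose, Matrix.mul_assoc]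

theorem rectDiag_apply {n p : ℕ} (hpn : p ≤ n) (s : Fin p → ℝ) (a : Fin n) (j : Fin p) :
    rectDiag n p s a j = if a = Fin.castLE hpn j then s j else 0 := by
  simp [rectDiag, Fin.ext_iff]

theorem finner_rectDiag_mul_mul_rectDiag {n p : ℕ} (hpn : p ≤ n) (s t : Fin p → ℝ)
    (P : Matrix (Fin p) (Fin p) ℝ) (Q : Matrix (Fin n) (Fin n) ℝ) :
    finner (rectDiag n p s * P) (Q * rectDiag n p t) =
      ∑ i, ∑ j, s i * t j * (Q (Fin.castLE hpn i) (Fin.castLE hpn j) * P i j) := by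
  simp only [finner, trace, Matrix.diag_apply, mul_apply, transpose_apply, rectDiag_apply hpn,
    ite_mul, zero_mul, mul_ite, mul_zero, sum_ite_eq', mem_univ, if_true]
  refine (sum_congr rfl fun j _ ↦ ?_).trans sum_comm
  simp only [sum_mul, ite_mul, zero_mul]
  rw [sum_comm]
  simp only [sum_ite_eq', mem_univ, if_true]
  exact sum_congr rfl fun i _ ↦ by ring

theorem vonNeumann_trace_inequality {n p : ℕ} (hpn : p ≤ n)
    (X Y : Matrix (Fin n) (Fin p) ℝ)
    (U₁ U₂ : Matrix (Fin n) (Fin n) ℝ) (V₁ V₂ : Matrix (Fin p) (Fin p) ℝ)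
    (hU₁ : U₁ᵀ * U₁ = 1) (hU₂ : U₂ᵀ * U₂ = 1) (hV₁ : V₁ᵀ * V₁ = 1) (hV₂ : V₂ᵀ * V₂ = 1)
    (s t : Fin p → ℝ) (hs : Antitone s) (ht : Antitone t)
    (hs0 : ∀ j, 0 ≤ s j) (ht0 : ∀ j, 0 ≤ t j)
    (hX : X = U₁ * rectDiag n p s * V₁ᵀ) (hY : Y = U₂ * rectDiag n p t * V₂ᵀ) :
    finner X Y ≤ ∑ j, s j * t j := by
  set Q := U₁ᵀ * U₂
  set P := V₁ᵀ * V₂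
  set e := Fin.castLE hpn
  have hst : Monovary s t := hs.monovary ht
  have hQ : ∑ i, ∑ j, Q (e i) (e j) ^ 2 * s i * t j ≤ ∑ j, s j * t j :=
    hst.sum_submatrix_mul_mul_le_of_mem_doublyStochastic hs0 ht0
      (map_sq_mem_doublyStochastic (orthogonal_transpose_mul hU₁ hU₂)) (Fin.castLE_injective hpn)
  have hP : ∑ i, ∑ j, P i j ^ 2 * s i * t j ≤ ∑ j, s j * t j :=
    hst.sum_mul_mul_le_of_mem_doublyStochastic
      (map_sq_mem_doublyStochastic (orthogonal_transpose_mul hV₁ hV₂))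
  rw [hX, hY, finner_mul_mul_transpose, finner_rectDiag_mul_mul_rectDiag hpn]
  calc ∑ i, ∑ j, s i * t j * (Q (e i) (e j) * P i j)
      ≤ ∑ i, ∑ j, s i * t j * ((Q (e i) (e j) ^ 2 + P i j ^ 2) / 2) := by
        gcongr with i _ j _
        · exact mul_nonneg (hs0 i) (ht0 j)
        · linarith [two_mul_le_add_sq (Q (e i) (e j)) (P i j)]
    _ = ((∑ i, ∑ j, Q (e i) (e j) ^ 2 * s i * t j) + ∑ i, ∑ j, P i j ^ 2 * s i * t j) / 2 := by
        simp only [← sum_add_distrib, sum_div]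
        exact sum_congr rfl fun i _ ↦ sum_congr rfl fun j _ ↦ by ring
    _ ≤ ∑ j, s j * t j := by linarith
end

section
/- If X̄, X̂ ∈ R^{n×p} are simultaneously polarizable (some U with UᵀU = I_p satisfies X̄Uᵀ, X̂Uᵀ ⪰ 0) and ‖X̄‖_* = ‖X̂‖_*, then the nuclear norm is constant on the segment [X̄, X̂]: ‖tX̂ + (1−t)X̄‖_* = ‖X̄‖_* for all t ∈ [0,1]. -/
open Matrix

/-!
If `X Uᵀ = P ⪰ 0` with `Uᵀ U = I`, then `X = P U` and `S := Uᵀ P U ⪰ 0` satisfies `S² = Xᵀ X`,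
so `S` is the square root `(Xᵀ X)^{1/2}` and `‖X‖_* = tr S = tr (X Uᵀ)`. For a common polarizer `U`
the nuclear norm is therefore the linear functional `X ↦ tr (X Uᵀ)` on the convex cone
`{X | X Uᵀ ⪰ 0}`, which contains the segment `[X̄, X̂]`; a linear functional taking equal values at
the endpoints is constant on the segment.
-/

variable {m n : Type*} [Fintype m] [Fintype n] [DecidableEq n]

theorem nuclearNorm_eq_trace_of_sq_eq {X : Matrix m n ℝ} {S : Matrix n n ℝ}
    (hS : S.PosSemidef) (hsq : S ^ 2 = Xᵀ * X) : nuclearNorm X = S.trace := by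
  have hcfc := (posSemidef_conjTranspose_mul_self X).1.cfc_eq Real.sqrt
  simp only [IsHermitian.cfc, Unitary.conjStarAlgAut_apply] at hcfc
  rw [nuclearNorm, ← hcfc, conjTranspose_eq_transpose_of_trivial, ← hsq,
    ← cfc_comp_pow Real.sqrt 2 S (ha := hS.1.isSelfAdjoint)]
  congr 1
  rw [cfc_congr (g := id) (a := S), cfc_id ℝ S hS.1.isSelfAdjoint]
  intro x hx
  rw [hS.1.spectrum_real_eq_range_eigenvalues] at hx
  obtain ⟨i, rfl⟩ := hx
  simp [Real.sqrt_sq (hS.eigenvalues_nonneg i)]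

theorem nuclearNorm_eq_trace_mul_transpose {X U : Matrix m n ℝ} (hU : Uᵀ * U = 1)
    (hXU : (X * Uᵀ).PosSemidef) : nuclearNorm X = (X * Uᵀ).trace := by
  set P := X * Uᵀ
  have hX : X = P * U := by rw [Matrix.mul_assoc, hU, Matrix.mul_one]
  have hPUU : P * U * Uᵀ = P := by rw [← hX]
  have hPsymm : Pᵀ = P := by
    simpa only [IsHermitian, conjTranspose_eq_transpose_of_trivial] using hXU.1
  have hS : (Uᵀ * P * U).PosSemidef := by
    simpa only [conjTranspose_eq_transpose_of_trivial] using hXU.conjTranspose_mul_mul_same U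
  have hsq : (Uᵀ * P * U) ^ 2 = Xᵀ * X := by
    calc (Uᵀ * P * U) ^ 2 = Uᵀ * (P * U * Uᵀ) * (P * U) := by
          simp only [pow_two, Matrix.mul_assoc]
      _ = Xᵀ * X := by rw [hPUU, hX, transpose_mul, hPsymm]
  rw [nuclearNorm_eq_trace_of_sq_eq hS hsq, Matrix.mul_assoc, trace_mul_comm, Matrix.mul_assoc,
    ← Matrix.mul_assoc, hPUU]

theorem nuclearNorm_constant_on_segment {n p : ℕ}
    (Xb Xh : Matrix (Fin n) (Fin p) ℝ)
    (U : Matrix (Fin n) (Fin p) ℝ) (hU : Uᵀ * U = 1)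
    (hb : (Xb * Uᵀ).PosSemidef) (hh : (Xh * Uᵀ).PosSemidef)
    (hnorm : nuclearNorm Xb = nuclearNorm Xh) :
    ∀ t : ℝ, t ∈ Set.Icc (0 : ℝ) 1 →
      nuclearNorm (t • Xh + (1 - t) • Xb) = nuclearNorm Xb := by
  rintro t ⟨ht0, ht1⟩
  have hdistrib : (t • Xh + (1 - t) • Xb) * Uᵀ = t • (Xh * Uᵀ) + (1 - t) • (Xb * Uᵀ) := by
    rw [Matrix.add_mul, Matrix.smul_mul, Matrix.smul_mul]
  have hseg : ((t • Xh + (1 - t) • Xb) * Uᵀ).PosSemidef := by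
    rw [hdistrib]
    exact (hh.smul ht0).add (hb.smul (sub_nonneg.mpr ht1))
  rw [nuclearNorm_eq_trace_mul_transpose hU hseg, hdistrib, trace_add, trace_smul, trace_smul,
    ← nuclearNorm_eq_trace_mul_transpose hU hb, ← nuclearNorm_eq_trace_mul_transpose hU hh,
    ← hnorm, smul_eq_mul, smul_eq_mul]
  ring
end
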